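/- arXiv:2503.18048 — 3 statements merged into one kernel-verified Lean document; each statement's English description precedes it below -/
import Mathlib

section
/- Let m ∈ ℕ and let B be a random variable with the binomial distribution with m trials and success probability 1/2. Then E[ B / (1 + m − B) ] = 1 − 2^{−m}; in particular E[ B / (1 + m − B) ] ≤ 1. -/
/-! Since `k * C(m, k) = (m + 1 - k) * C(m, k - 1)` for `1 ≤ k ≤ m`, the expectation is
`2⁻ᵐ * ∑_{j < m} C(m, j) = 2⁻ᵐ * (2ᵐ - 1)`. -/

open MeasureTheory Finset

theorem succ_div_sub_mul_choose_succ {m k : ℕ} (hk : k < m) :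
    ((k + 1 : ℕ) : ℝ) / (1 + m - (k + 1 : ℕ)) * m.choose (k + 1) = m.choose k := by
  have hrec : (m.choose (k + 1) : ℝ) * (k + 1) = m.choose k * (m - k) := by
    have h := congr_arg (Nat.cast (R := ℝ)) (Nat.choose_succ_right_eq m k)
    push_cast [Nat.cast_sub hk.le] at h
    exact h
  have hpos : (0 : ℝ) < m - k := sub_pos.2 (by exact_mod_cast hk)
  push_cast
  rw [show (1 + m - (k + 1) : ℝ) = m - k by ring]
  field_simp
  linarith

theorem sum_range_div_sub_mul_choose (m : ℕ) :
    ∑ k ∈ range (m + 1), (k : ℝ) / (1 + m - k) * m.choose k = 2 ^ m - 1 := by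
  have hsum : ∑ k ∈ range m, (m.choose k : ℝ) = 2 ^ m - 1 := by
    have hall := congr_arg (Nat.cast (R := ℝ)) (Nat.sum_range_choose m)
    rw [sum_range_succ, Nat.choose_self] at hall
    push_cast at hall
    linarith
  rw [sum_range_succ',
    sum_congr rfl fun k hk => succ_div_sub_mul_choose_succ (mem_range.1 hk), hsum]
  simp

section

variable {Ω α E : Type*} [MeasurableSpace Ω] [Countable α] {μ : Measure Ω} {X : Ω → α}

theorem ae_mem_of_forall_notMem_measure_eq_zero {s : Set α}
    (h : ∀ a ∉ s, μ {ω | X ω = a} = 0) : ∀ᵐ ω ∂μ, X ω ∈ s := by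
  rw [ae_iff]
  have : {ω | X ω ∉ s} = ⋃ a ∈ sᶜ, {ω | X ω = a} := by ext; simp
  rw [this, measure_biUnion_null_iff (Set.to_countable _)]
  exact h

theorem integral_comp_eq_sum_of_ae_mem [MeasurableSpace α] [MeasurableSingletonClass α]
    [NormedAddCommGroup E] [NormedSpace ℝ E] [CompleteSpace E]
    [IsFiniteMeasure μ] (hX : Measurable X) {s : Finset α} (hs : ∀ᵐ ω ∂μ, X ω ∈ s) (g : α → E) :
    ∫ ω, g (X ω) ∂μ = ∑ a ∈ s, μ.real {ω | X ω = a} • g a := by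
  have hmap : (μ.map X).restrict s = μ.map X :=
    Measure.restrict_eq_self_of_ae_mem ((ae_map_iff hX.aemeasurable s.measurableSet).2 hs)
  rw [← integral_map hX.aemeasurable StronglyMeasurable.of_discrete.aestronglyMeasurable, ← hmap,
    setIntegral_finset s IntegrableOn.finset]
  refine sum_congr rfl fun a _ => ?_
  rw [measureReal_def, measureReal_def, Measure.map_apply hX (measurableSet_singleton a)]
  rfl

end

/-- **Expectation of the binomial ratio.**
If `B` has the binomial distribution with `m` trials and success probability `1/2`,
i.e. `P(B = k) = C(m,k)·2^{-m}` for every `k`, then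
`E[ B / (1 + m - B) ] = 1 - 2^{-m}`, and in particular this expectation is `≤ 1`. -/
theorem binomial_ratio_expectation {Ω : Type*} [MeasurableSpace Ω]
    (ℙ : Measure Ω) [IsProbabilityMeasure ℙ] (m : ℕ)
    (B : Ω → ℕ) (hB : Measurable B)
    (hdist : ∀ k : ℕ, ℙ {ω | B ω = k} = ENNReal.ofReal ((m.choose k : ℝ) / 2 ^ m)) :
    (∫ ω, (B ω : ℝ) / (1 + (m : ℝ) - (B ω : ℝ)) ∂ℙ) = 1 - (2 : ℝ)⁻¹ ^ m ∧
    (∫ ω, (B ω : ℝ) / (1 + (m : ℝ) - (B ω : ℝ)) ∂ℙ) ≤ 1 := by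
  have hsupp : ∀ᵐ ω ∂ℙ, B ω ∈ range (m + 1) :=
    ae_mem_of_forall_notMem_measure_eq_zero fun k hk => by
      rw [hdist, Nat.choose_eq_zero_of_lt (by simpa using hk)]
      simp
  have hmean : ∫ ω, (B ω : ℝ) / (1 + m - B ω) ∂ℙ = 1 - (2 : ℝ)⁻¹ ^ m := by
    rw [integral_comp_eq_sum_of_ae_mem hB hsupp (fun k : ℕ => (k : ℝ) / (1 + m - k))]
    calc ∑ k ∈ range (m + 1), ℙ.real {ω | B ω = k} • ((k : ℝ) / (1 + m - k))
        = (∑ k ∈ range (m + 1), (k : ℝ) / (1 + m - k) * m.choose k) / 2 ^ m := by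
          rw [sum_div]
          refine sum_congr rfl fun k _ => ?_
          rw [measureReal_def, hdist, ENNReal.toReal_ofReal (by positivity), smul_eq_mul]
          ring
      _ = 1 - (2 : ℝ)⁻¹ ^ m := by
          rw [sum_range_div_sub_mul_choose, inv_pow]
          field_simp
  exact ⟨hmean, hmean ▸ sub_le_self 1 (by positivity)⟩
end

section
/- Let ε₁, …, ε_k (k ≥ 1) be independent random variables, each uniformly distributed on {−1, +1}. Set V⁺ = #{i ≤ k : ε_i = +1}, V⁻ = k − V⁺, and likewise V⁺′ = #{i ≤ k−1 : ε_i = +1}, V⁻′ = (k−1) − V⁺′. Then almost surely E[ V⁺′ / (1 + V⁻′) ∣ V⁺ ] ≤ V⁺ / (1 + V⁻); that is, the ratio process V⁺/(1+V⁻) is, in the direction of decreasing k, a supermartingale with respect to the filtration generated by the sign counts. -/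
/-!
Conditioned on `V⁺ = v`, the set `{i | ε i = 1}` is uniformly distributed among the `v`-subsets
of `Fin k`, so the last sign is `+1` with probability `v / k`. The conditional expectation is
therefore `(v / k) (v - 1) / (k - v + 1) + ((k - v) / k) v / (k - v)`, which equals
`v / (k - v + 1)` when `v < k`, and is `k - 1 ≤ k` when `v = k`.
-/

open MeasureTheory ProbabilityTheory Finset
open scoped Classical BigOperators

lemma Finset.sum_expect_fiber {ι κ M : Type*} [DecidableEq κ] [AddCommMonoid M] [Module ℚ≥0 M]
    (s : Finset ι) (f : ι → κ) (φ : ι → M) :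
    ∑ i ∈ s, 𝔼 j ∈ s with f j = f i, φ j = ∑ i ∈ s, φ i := by
  have hmaps : ∀ i ∈ s, f i ∈ s.image f := fun i hi => mem_image_of_mem f hi
  rw [← sum_fiberwise_of_maps_to hmaps, ← sum_fiberwise_of_maps_to hmaps]
  refine sum_congr rfl fun y _ => ?_
  calc ∑ i ∈ s with f i = y, 𝔼 j ∈ s with f j = f i, φ j
      = ∑ i ∈ s with f i = y, 𝔼 j ∈ s with f j = y, φ j :=
        sum_congr rfl fun i hi => by rw [(mem_filter.1 hi).2]
    _ = ∑ i ∈ s with f i = y, φ i := by rw [sum_const, card_smul_expect]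

section UniformConditioning

variable {Ω α β : Type*} [MeasurableSpace Ω] {P : Measure Ω}
  [Fintype α] [Nonempty α] [MeasurableSpace α] [MeasurableSingletonClass α] {X : Ω → α}

lemma integral_comp_eq_expect (hX : AEMeasurable X P)
    (hunif : P.map X = (PMF.uniformOfFintype α).toMeasure) (ψ : α → ℝ) :
    ∫ ω, ψ (X ω) ∂P = 𝔼 a, ψ a := by
  rw [← integral_map hX Measurable.of_discrete.aestronglyMeasurable, hunif, PMF.integral_eq_sum,
    expect_eq_sum_div_card, sum_div]
  simp [PMF.uniformOfFintype_apply, div_eq_inv_mul]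

lemma setIntegral_comp_preimage_eq_expect (hX : Measurable X)
    (hunif : P.map X = (PMF.uniformOfFintype α).toMeasure) (A : Set α) (ψ : α → ℝ) :
    ∫ ω in X ⁻¹' A, ψ (X ω) ∂P = 𝔼 a, A.indicator ψ a := by
  rw [← integral_indicator (hX (Set.toFinite A).measurableSet),
    ← integral_comp_eq_expect hX.aemeasurable hunif]
  rfl

theorem condExp_comp_ae_eq_expect_fiber [IsFiniteMeasure P] [MeasurableSpace β]
    [DiscreteMeasurableSpace β] [DecidableEq β] (hX : Measurable X)
    (hunif : P.map X = (PMF.uniformOfFintype α).toMeasure) (f : α → β) (φ : α → ℝ) :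
    P[φ ∘ X | MeasurableSpace.comap (f ∘ X) inferInstance] =ᵐ[P]
      fun ω => 𝔼 a with f a = f (X ω), φ a := by
  set g : β → ℝ := fun y => 𝔼 a with f a = y, φ a
  have hm : MeasurableSpace.comap (f ∘ X) inferInstance ≤ ‹MeasurableSpace Ω› :=
    (Measurable.of_discrete.comp hX).comap_le
  refine (ae_eq_condExp_of_forall_setIntegral_eq hm
    ((Integrable.of_finite (μ := P.map X) (f := φ)).comp_measurable hX) (fun _ _ _ => ?_) ?_
    ((Measurable.of_discrete (f := g)).comp (comap_measurable (f ∘ X))).aestronglyMeasurable).symm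
  · exact ((Integrable.of_finite (μ := P.map X) (f := g ∘ f)).comp_measurable hX).integrableOn
  · rintro _ ⟨T, -, rfl⟩ -
    change ∫ ω in X ⁻¹' (f ⁻¹' T), (g ∘ f) (X ω) ∂P = ∫ ω in X ⁻¹' (f ⁻¹' T), φ (X ω) ∂P
    rw [setIntegral_comp_preimage_eq_expect hX hunif,
      setIntegral_comp_preimage_eq_expect hX hunif, expect_eq_sum_div_card, expect_eq_sum_div_card,
      sum_indicator_eq_sum_filter, sum_indicator_eq_sum_filter]
    congr 1
    rw [← Finset.sum_expect_fiber _ f φ]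
    refine sum_congr rfl fun a ha => ?_
    rw [filter_filter]
    refine congrArg (expect · φ) (filter_congr fun b _ => ?_)
    simp only [mem_filter, mem_univ, true_and, Set.mem_preimage] at ha ⊢
    exact ⟨fun h => ⟨h ▸ ha, h⟩, And.right⟩

end UniformConditioning

section RandomFinset

variable {Ω ι β : Type*} [MeasurableSpace Ω] [MeasurableSpace β] [Fintype ι] {P : Measure Ω}
  {X : ι → Ω → β} {B : Set β}

lemma measurable_filter_mem (hB : MeasurableSet B) (hX : ∀ i, Measurable (X i)) :
    Measurable fun ω => univ.filter fun i => X i ω ∈ B :=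
  measurable_finset_iff.2 fun i => by simpa using measurableSet_setOfPred.1 (hX i hB)

lemma map_filter_mem_eq_uniform (hB : MeasurableSet B) (hX : ∀ i, Measurable (X i))
    (hindep : iIndepFun X P) (hhalf : ∀ i, P (X i ⁻¹' B) = 1 / 2) :
    P.map (fun ω => univ.filter fun i => X i ω ∈ B) =
      (PMF.uniformOfFintype (Finset ι)).toMeasure := by
  have := hindep.isProbabilityMeasure
  refine Measure.ext_of_singleton fun s => ?_
  have hpre : (fun ω => univ.filter fun i => X i ω ∈ B) ⁻¹' {s} =
      ⋂ i, X i ⁻¹' (if i ∈ s then B else Bᶜ) := by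
    ext ω
    simp only [Set.mem_preimage, Set.mem_singleton_iff, Finset.ext_iff, mem_filter, mem_univ,
      true_and, Set.mem_iInter]
    refine forall_congr' fun i => ?_
    split_ifs with hi <;> simp [hi]
  have hhalf' : ∀ i, P (X i ⁻¹' (if i ∈ s then B else Bᶜ)) = 2⁻¹ := by
    intro i
    split_ifs
    · rw [hhalf i, one_div]
    · rw [Set.preimage_compl, prob_compl_eq_one_sub (hX i hB), hhalf i, one_div,
        ENNReal.one_sub_inv_two]
  rw [Measure.map_apply (measurable_filter_mem hB hX) (measurableSet_singleton s), hpre,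
    hindep.meas_iInter fun i => ⟨if i ∈ s then B else Bᶜ, by split_ifs; exacts [hB, hB.compl], rfl⟩,
    PMF.toMeasure_apply_singleton _ _ (measurableSet_singleton s), PMF.uniformOfFintype_apply,
    Fintype.card_finset]
  simp [hhalf', ENNReal.inv_pow]

end RandomFinset

noncomputable def signRatio (n j : ℝ) : ℝ := j / (1 + (n - j))

section Combinatorics

variable {α : Type*} [Fintype α] [DecidableEq α]

lemma card_filter_mem_powersetCard_mul_card (a : α) (v : ℕ) :
    #{s ∈ powersetCard v univ | a ∈ s} * Fintype.card α = v * (Fintype.card α).choose v := by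
  rcases v with _ | u
  · simp
  obtain ⟨m, hm⟩ : ∃ m, Fintype.card α = m + 1 :=
    Nat.exists_eq_add_one.2 (Fintype.card_pos_iff.2 ⟨a⟩)
  have hcount : #{s ∈ powersetCard (u + 1) univ | a ∈ s} = m.choose u := by
    simpa [hm] using card_filter_powersetCard_subset {a} univ (u + 1) (subset_univ _) (by simp)
  rw [hcount, hm, mul_comm, Nat.add_one_mul_choose_eq, mul_comm]

lemma card_mul_expect_card_erase (a : α) (g : ℕ → ℝ) {v : ℕ} (hv : v ≤ Fintype.card α) :
    Fintype.card α * 𝔼 s ∈ powersetCard v univ, g #(s.erase a) =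
      v * g (v - 1) + (Fintype.card α - v) * g v := by
  set n := Fintype.card α
  have hsplit : ∑ s ∈ powersetCard v univ, g #(s.erase a) =
      #{s ∈ powersetCard v univ | a ∈ s} * g (v - 1) +
        #{s ∈ powersetCard v univ | a ∉ s} * g v := by
    rw [← sum_filter_add_sum_filter_not _ (a ∈ ·)]
    congr 1
    · rw [← nsmul_eq_mul, ← sum_const]
      refine sum_congr rfl fun s hs => ?_
      rw [mem_filter, mem_powersetCard_univ] at hs
      rw [card_erase_of_mem hs.2, hs.1]
    · rw [← nsmul_eq_mul, ← sum_const]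
      refine sum_congr rfl fun s hs => ?_
      rw [mem_filter, mem_powersetCard_univ] at hs
      rw [erase_eq_of_notMem hs.2, hs.1]
  have hcompl : (#{s ∈ powersetCard v univ | a ∈ s} : ℝ) + #{s ∈ powersetCard v univ | a ∉ s} =
      n.choose v := by
    exact_mod_cast (card_filter_add_card_filter_not (s := powersetCard v univ) (a ∈ ·)).trans
      (by rw [card_powersetCard, card_univ])
  have hmem : (#{s ∈ powersetCard v univ | a ∈ s} : ℝ) * n = v * n.choose v := by
    exact_mod_cast card_filter_mem_powersetCard_mul_card a v
  have hchoose : (n.choose v : ℝ) ≠ 0 := by exact_mod_cast (Nat.choose_pos hv).ne'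
  rw [expect_eq_sum_div_card, hsplit, card_powersetCard, card_univ, mul_div_assoc',
    div_eq_iff hchoose]
  linear_combination (g (v - 1) - g v) * hmem + n * g v * hcompl

lemma signRatio_average_le {n v : ℕ} (hv : v ≤ n) :
    v * signRatio (n - 1) (v - 1 : ℕ) + (n - v) * signRatio (n - 1) v ≤ n * signRatio n v := by
  rcases v with _ | u
  · simp [signRatio]
  obtain ⟨d, rfl⟩ := Nat.exists_eq_add_of_le hv
  rcases d with _ | e
  · norm_num [signRatio]
    gcongr
    simp
  · apply le_of_eq
    simp only [signRatio, Nat.add_sub_cancel]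
    push_cast
    ring_nf
    field_simp
    ring

lemma expect_signRatio_card_erase_le (a : α) {v : ℕ} (hv : v ≤ Fintype.card α) :
    𝔼 s ∈ powersetCard v univ, signRatio (Fintype.card α - 1) #(s.erase a) ≤
      signRatio (Fintype.card α) v := by
  have hn : (0 : ℝ) < Fintype.card α := by exact_mod_cast Fintype.card_pos_iff.2 ⟨a⟩
  refine le_of_mul_le_mul_left ?_ hn
  rw [card_mul_expect_card_erase a (fun j => signRatio (Fintype.card α - 1) j) hv]
  exact signRatio_average_le hv

end Combinatorics

/-- **One-step backward supermartingale property of the sign-ratio process.**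
Let `ε₁, …, ε_k` (`k ≥ 1`) be i.i.d. uniform `{-1, +1}` random variables, let
`V⁺ = #{i ≤ k : ε_i = +1}`, `V⁻ = k - V⁺`, and let `V⁺′, V⁻′` be the analogous
counts over the first `k - 1` signs. Then a.s.
`E[ V⁺′ / (1 + V⁻′) ∣ V⁺ ] ≤ V⁺ / (1 + V⁻)`. -/
theorem sign_ratio_one_step_supermartingale
    {Ω : Type*} [MeasurableSpace Ω]
    (P : Measure Ω) [IsProbabilityMeasure P]
    (k : ℕ) (hk : 1 ≤ k) (ε : Fin k → Ω → ℝ) (hmeas : ∀ i, Measurable (ε i))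
    (hindep : iIndepFun ε P)
    (hunif : ∀ i, P {ω | ε i ω = 1} = 1 / 2 ∧ P {ω | ε i ω = -1} = 1 / 2) :
    ∀ᵐ ω ∂P,
      (P[fun ω' =>
            ((univ.filter fun i : Fin k => (i : ℕ) < k - 1 ∧ ε i ω' = 1).card : ℝ) /
              (1 + (((k : ℝ) - 1) -
                ((univ.filter fun i : Fin k => (i : ℕ) < k - 1 ∧ ε i ω' = 1).card : ℝ)))
          | MeasurableSpace.comap
              (fun ω' => (univ.filter fun i : Fin k => ε i ω' = 1).card)
              inferInstance]) ω ≤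
        ((univ.filter fun i : Fin k => ε i ω = 1).card : ℝ) /
          (1 + ((k : ℝ) - ((univ.filter fun i : Fin k => ε i ω = 1).card : ℝ))) := by
  set S : Ω → Finset (Fin k) := fun ω => univ.filter fun i => ε i ω = 1
  let last : Fin k := ⟨k - 1, by omega⟩
  have hSmeas : Measurable S := measurable_filter_mem (measurableSet_singleton 1) hmeas
  have hSunif : P.map S = (PMF.uniformOfFintype (Finset (Fin k))).toMeasure :=
    map_filter_mem_eq_uniform (measurableSet_singleton 1) hmeas hindep fun i => (hunif i).1
  have hprefix : ∀ ω, (univ.filter fun i : Fin k => (i : ℕ) < k - 1 ∧ ε i ω = 1) = (S ω).erase last := by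
    intro ω
    ext i
    simp only [mem_filter, mem_univ, true_and, mem_erase, ne_eq, Fin.ext_iff, and_congr_left_iff,
      S, last]
    intro
    omega
  have hcond := condExp_comp_ae_eq_expect_fiber hSmeas hSunif card
    fun s => signRatio ((k : ℝ) - 1) #(s.erase last)
  simp_rw [hprefix]
  filter_upwards [hcond] with ω hω
  have hfiber : (univ.filter fun s : Finset (Fin k) => #s = #(S ω)) = powersetCard #(S ω) univ := by
    ext; simp
  have hbound := expect_signRatio_card_erase_le last (card_le_univ (S ω))
  rw [Fintype.card_fin, ← hfiber] at hbound
  exact hω.trans_le hbound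
end

section
/- Let ε₁, …, ε_m be independent random variables, each uniformly distributed on {−1, +1}. For k = 0, 1, …, m let V⁺(k) = #{i ≤ k : ε_i = +1}, V⁻(k) = k − V⁺(k), and M_k = V⁺(k) / (1 + V⁻(k)). Re-index time backwards by setting N_j = M_{m−j} for j = 0, 1, …, m, and let (G_j)_{j=0}^{m} be the filtration G_j = σ( V⁺(m), V⁺(m−1), …, V⁺(m−j) ). Then (N_j)_{j=0}^{m} is a supermartingale with respect to (G_j), and for every stopping time T ≤ m with respect to (G_j) one has E[ N_T ] ≤ E[ N_0 ] = 1 − 2^{−m} ≤ 1. -/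
/-!
Everything is a function of the sign pattern `(ε₁ = 1, …, ε_m = 1) ∈ Boolᵐ`, which is uniformly
distributed. Knowing `G_j`, i.e. `V⁺(m), …, V⁺(k)` for `k = m - j`, leaves the first `k` signs
exchangeable, so the `k`-th sign is `+1` with conditional probability `v / k`, where `v = V⁺(k)`.
Hence `E[N_{j+1} | G_j] = (v/k)·(v-1)/(1+k-v) + ((k-v)/k)·v/(k-v)`, which is `v/(1+k-v) = N_j`
for `v < k` and `k - 1 < k = N_j` for `v = k`. Exchangeability is used through double counting:
summed over a set of patterns invariant under permutations of the first `k` signs, the `k`-th sign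
may be replaced by any of the first `k`. Optional stopping for bounded stopping times gives
`E[N_T] ≤ E[N_0]`, and `E[N_0] = 2⁻ᵐ ∑_v C(m,v)·v/(m+1-v) = 2⁻ᵐ ∑_{v ≥ 1} C(m,v-1) = 1 - 2⁻ᵐ`.
-/

open MeasureTheory ProbabilityTheory Finset
open scoped Classical

/-- `Vplus m ε k ω` is the number of `+1`'s among the first `k` of the `m` signs
`ε₁(ω), …, ε_m(ω)`. -/
noncomputable def Vplus {Ω : Type*} (m : ℕ) (ε : Fin m → Ω → ℝ) (k : ℕ) (ω : Ω) : ℕ :=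
  (univ.filter fun i : Fin m => (i : ℕ) < k ∧ ε i ω = 1).card

/-- `ratioM m ε k = V⁺(k) / (1 + V⁻(k))` where `V⁻(k) = k - V⁺(k)`. -/
noncomputable def ratioM {Ω : Type*} (m : ℕ) (ε : Fin m → Ω → ℝ) (k : ℕ) (ω : Ω) : ℝ :=
  (Vplus m ε k ω : ℝ) / (1 + ((k : ℝ) - (Vplus m ε k ω : ℝ)))

/-- The ratio process re-indexed backwards in time: `N_j = M_{m-j}`. -/
noncomputable def ratioN {Ω : Type*} (m : ℕ) (ε : Fin m → Ω → ℝ) (j : ℕ) (ω : Ω) : ℝ :=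
  ratioM m ε (m - j) ω

theorem MeasureTheory.Supermartingale.integral_stopped_le_integral_zero {Ω : Type*}
    {mΩ : MeasurableSpace Ω} {μ : Measure Ω} [IsFiniteMeasure μ] {𝒢 : Filtration ℕ mΩ}
    {f : ℕ → Ω → ℝ} (hf : Supermartingale f 𝒢 μ) {T : Ω → ℕ}
    (hT : IsStoppingTime 𝒢 fun ω => (T ω : WithTop ℕ)) {N : ℕ} (hTN : ∀ ω, T ω ≤ N) :
    ∫ ω, f (T ω) ω ∂μ ≤ ∫ ω, f 0 ω ∂μ := by
  have := hf.neg.expected_stoppedValue_mono (isStoppingTime_const 𝒢 0) hT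
    (fun ω => WithTop.coe_le_coe.mpr (Nat.zero_le _)) (N := N)
    fun ω => WithTop.coe_le_coe.mpr (hTN ω)
  change ∫ ω, -f 0 ω ∂μ ≤ ∫ ω, -f (T ω) ω ∂μ at this
  rwa [integral_neg, integral_neg, neg_le_neg_iff] at this

theorem Finset.sum_comp_swap {ι α M : Type*} [DecidableEq ι] [AddCommMonoid M]
    {B : Finset (ι → α)} {a b : ι} (hB : ∀ β ∈ B, β ∘ Equiv.swap a b ∈ B) (g : (ι → α) → M) :
    ∑ β ∈ B, g (β ∘ Equiv.swap a b) = ∑ β ∈ B, g β :=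
  sum_nbij' (· ∘ Equiv.swap a b) (· ∘ Equiv.swap a b) hB hB
    (fun β _ => by ext; simp) (fun β _ => by ext; simp) (fun _ _ => rfl)

theorem MeasurableSpace.mem_iff_of_measurableSet_iSup_comap {ι X Y : Type*}
    [mY : MeasurableSpace Y] {f : ι → X → Y} {p : ι → Prop} {s : Set X}
    (hs : MeasurableSet[⨆ (i) (_ : p i), MeasurableSpace.comap (f i) mY] s) {x y : X}
    (hxy : ∀ i, p i → f i x = f i y) : x ∈ s ↔ y ∈ s := by
  let F : X → {i // p i} → Y := fun x i => f i x
  have hle : ⨆ (i) (_ : p i), MeasurableSpace.comap (f i) mY ≤ MeasurableSpace.comap F ⊤ :=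
    iSup₂_le fun i hi => by
      rw [show f i = (fun g => g ⟨i, hi⟩) ∘ F from rfl, ← MeasurableSpace.comap_comp]
      exact MeasurableSpace.comap_mono le_top
  obtain ⟨A, -, rfl⟩ := hle s hs
  have hF : F x = F y := funext fun i => hxy i i.2
  simp only [Set.mem_preimage, hF]

namespace SignRatio

noncomputable def ratio (k u : ℕ) : ℝ := u / (1 + ((k : ℝ) - u))

theorem ratio_zero_right (k : ℕ) : ratio k 0 = 0 := by simp [ratio]

theorem mul_ratio_pred_add_le {k c : ℕ} (hc : c ≤ k + 1) :
    c * ratio k (c - 1) + ((k + 1 - c : ℕ) : ℝ) * ratio k c ≤ (k + 1) * ratio (k + 1) c := by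
  rcases c with _ | c
  · simp [ratio]
  rcases (Nat.lt_succ_iff.mp hc).lt_or_eq with hck | rfl
  · have hpos : (0 : ℝ) < k - c := sub_pos.mpr (by exact_mod_cast hck)
    have h₁ : (1 : ℝ) + (k - c) ≠ 0 := by linarith
    have h₂ : (1 : ℝ) + (k - (c + 1)) ≠ 0 := by linarith
    have h₃ : (1 : ℝ) + (k + 1 - (c + 1)) ≠ 0 := by linarith
    apply le_of_eq
    rw [ratio, ratio, ratio, Nat.add_sub_cancel, Nat.add_sub_add_right, Nat.cast_sub hck.le]
    push_cast
    field_simp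
    ring
  · simp only [ratio, Nat.add_sub_cancel, Nat.sub_self]
    push_cast
    simp only [sub_self, add_zero, div_one]
    nlinarith

theorem choose_mul_ratio_succ {m v : ℕ} (hv : v < m) :
    (m.choose (v + 1) : ℝ) * ratio m (v + 1) = m.choose v := by
  have hchoose : (m.choose (v + 1) : ℝ) * (v + 1) = m.choose v * ((m - v : ℕ) : ℝ) := by
    exact_mod_cast Nat.choose_succ_right_eq m v
  have hden : (1 + ((m : ℝ) - (v + 1 : ℕ))) = ((m - v : ℕ) : ℝ) := by
    push_cast [Nat.cast_sub hv.le]; ring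
  have hpos : (0 : ℝ) < ((m - v : ℕ) : ℝ) := by exact_mod_cast Nat.sub_pos_of_lt hv
  rw [ratio, hden, ← mul_div_assoc, div_eq_iff hpos.ne', ← hchoose]
  push_cast; ring

theorem sum_choose_mul_ratio (m : ℕ) :
    ∑ v ∈ range (m + 1), (m.choose v : ℝ) * ratio m v = 2 ^ m - 1 := by
  have hsum : (∑ v ∈ range m, (m.choose v : ℝ)) + 1 = 2 ^ m := by
    have := Nat.sum_range_choose m
    rw [sum_range_succ, Nat.choose_self] at this
    exact_mod_cast this
  rw [sum_range_succ', ratio_zero_right, mul_zero, add_zero,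
    sum_congr rfl fun v hv => choose_mul_ratio_succ (mem_range.mp hv)]
  linarith

variable {m : ℕ}

noncomputable def countTrue (k : ℕ) (β : Fin m → Bool) : ℕ :=
  #{i : Fin m | (i : ℕ) < k ∧ β i = true}

theorem card_filter_val_lt_of_le {k : ℕ} (hk : k ≤ m) : #{i : Fin m | (i : ℕ) < k} = k := by
  rw [Fin.card_filter_val_lt, min_eq_right hk]

theorem countTrue_eq_card_filter (k : ℕ) (β : Fin m → Bool) :
    countTrue k β = #(({i | (i : ℕ) < k} : Finset (Fin m)).filter (β · = true)) := by
  rw [countTrue, filter_filter]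

theorem countTrue_le {k : ℕ} (hk : k ≤ m) (β : Fin m → Bool) : countTrue k β ≤ k := by
  rw [countTrue_eq_card_filter]
  exact (card_filter_le _ _).trans (card_filter_val_lt_of_le hk).le

theorem countTrue_succ (i : Fin m) (β : Fin m → Bool) :
    countTrue (i + 1) β = countTrue i β + (β i).toNat := by
  have hsplit : (univ.filter fun j : Fin m => (j : ℕ) < i + 1 ∧ β j = true) =
      (univ.filter fun j : Fin m => (j : ℕ) < i ∧ β j = true) ∪ ({i} : Finset (Fin m)).filter
        (β · = true) := by
    ext j
    by_cases hβ : β j = true <;> simp [hβ, Fin.ext_iff]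
    omega
  rw [countTrue, countTrue, hsplit, card_union_of_disjoint (disjoint_left.mpr fun j _ _ => by
    simp_all)]
  cases hβ : β i <;> simp [hβ, filter_singleton]

theorem countTrue_comp_perm {k : ℕ} (σ : Equiv.Perm (Fin m))
    (hσ : ∀ i, (σ i : ℕ) < k ↔ (i : ℕ) < k) (β : Fin m → Bool) :
    countTrue k (β ∘ σ) = countTrue k β :=
  card_equiv σ fun i => by simp [hσ]

theorem countTrue_comp_swap {k : ℕ} {a b : Fin m} (ha : (a : ℕ) < k) (hb : (b : ℕ) < k)
    (β : Fin m → Bool) : countTrue k (β ∘ Equiv.swap a b) = countTrue k β := by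
  refine countTrue_comp_perm _ (fun i => ?_) β
  rcases eq_or_ne i a with rfl | hia
  · simp [ha, hb]
  rcases eq_or_ne i b with rfl | hib
  · simp [ha, hb]
  rw [Equiv.swap_apply_of_ne_of_ne hia hib]

theorem sum_filter_val_lt_comp {k : ℕ} (hk : k ≤ m) (β : Fin m → Bool) (F : Bool → ℝ) :
    ∑ a ∈ {a : Fin m | (a : ℕ) < k}, F (β a) =
      countTrue k β * F true + ((k - countTrue k β : ℕ) : ℝ) * F false := by
  have hcard := card_filter_add_card_filter_not (s := {a : Fin m | (a : ℕ) < k})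
    (fun a => β a = true)
  rw [card_filter_val_lt_of_le hk, ← countTrue_eq_card_filter] at hcard
  rw [← sum_filter_add_sum_filter_not _ (fun a => β a = true),
    sum_congr rfl fun a ha => congrArg F (mem_filter.mp ha).2,
    sum_congr rfl fun a ha => congrArg F (Bool.eq_false_iff.mpr (mem_filter.mp ha).2),
    sum_const, sum_const, ← countTrue_eq_card_filter, nsmul_eq_mul, nsmul_eq_mul,
    show k - countTrue k β = #(({a | (a : ℕ) < k} : Finset (Fin m)).filter (¬β · = true)) by
      omega]

theorem sum_comp_countTrue_self (f : ℕ → ℝ) :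
    ∑ β : Fin m → Bool, f (countTrue m β) = ∑ v ∈ range (m + 1), (m.choose v : ℝ) * f v := by
  calc ∑ β : Fin m → Bool, f (countTrue m β)
      = ∑ S ∈ (univ : Finset (Fin m)).powerset, f #S := by
        rw [powerset_univ]
        refine sum_nbij' (fun β => ({i | β i = true} : Finset (Fin m))) (fun S i => decide (i ∈ S))
          (by simp) (by simp) (fun β _ => by ext; simp) (fun S _ => by ext; simp)
          (fun β _ => ?_)
        simp [countTrue]
    _ = _ := by
        simp only [sum_powerset_apply_card, card_univ, Fintype.card_fin, nsmul_eq_mul]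

theorem succ_mul_sum_comp_countTrue (i : Fin m) {B : Finset (Fin m → Bool)}
    (hB : ∀ a ≤ i, ∀ β ∈ B, β ∘ Equiv.swap a i ∈ B) (f : ℕ → ℝ) :
    ((i : ℝ) + 1) * ∑ β ∈ B, f (countTrue i β) =
      ∑ β ∈ B, (countTrue (i + 1) β * f (countTrue (i + 1) β - 1) +
        ((i + 1 - countTrue (i + 1) β : ℕ) : ℝ) * f (countTrue (i + 1) β)) := by
  have hi : (i : ℕ) + 1 ≤ m := i.isLt
  have hswap : ∀ a ∈ ({a | (a : ℕ) < i + 1} : Finset (Fin m)),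
      ∑ β ∈ B, f (countTrue i β) = ∑ β ∈ B, f (countTrue (i + 1) β - (β a).toNat) := by
    intro a ha
    have ha : a ≤ i := Fin.le_def.mpr (Nat.lt_succ_iff.mp (mem_filter.mp ha).2)
    rw [eq_comm, ← sum_comp_swap (hB a ha)]
    refine sum_congr rfl fun β _ => ?_
    rw [Function.comp_apply, Equiv.swap_apply_left,
      countTrue_comp_swap (by omega) (Nat.lt_succ_self _), countTrue_succ, Nat.add_sub_cancel]
  calc ((i : ℝ) + 1) * ∑ β ∈ B, f (countTrue i β)
      = ∑ a ∈ ({a | (a : ℕ) < i + 1} : Finset (Fin m)), ∑ β ∈ B, f (countTrue i β) := by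
        rw [sum_const, card_filter_val_lt_of_le hi, nsmul_eq_mul]
        push_cast; ring
    _ = ∑ β ∈ B, ∑ a ∈ ({a | (a : ℕ) < i + 1} : Finset (Fin m)),
          f (countTrue (i + 1) β - (β a).toNat) := by
        rw [sum_congr rfl hswap, sum_comm]
    _ = _ := sum_congr rfl fun β _ => by
        rw [sum_filter_val_lt_comp hi β fun b => f (countTrue (i + 1) β - b.toNat)]
        simp only [Bool.toNat_true, Bool.toNat_false, Nat.sub_zero]

theorem sum_ratio_countTrue_le (i : Fin m) {B : Finset (Fin m → Bool)}
    (hB : ∀ a ≤ i, ∀ β ∈ B, β ∘ Equiv.swap a i ∈ B) :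
    ∑ β ∈ B, ratio i (countTrue i β) ≤ ∑ β ∈ B, ratio (i + 1) (countTrue (i + 1) β) := by
  refine le_of_mul_le_mul_left ?_ (by positivity : (0 : ℝ) < i + 1)
  rw [succ_mul_sum_comp_countTrue i hB, mul_sum]
  gcongr with β
  exact mul_ratio_pred_add_le (countTrue_le i.isLt β)

section SignPattern

variable {Ω : Type*}

noncomputable def signPattern (ε : Fin m → Ω → ℝ) (ω : Ω) : Fin m → Bool :=
  fun i => decide (ε i ω = 1)

theorem Vplus_eq_countTrue (ε : Fin m → Ω → ℝ) (k : ℕ) (ω : Ω) :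
    Vplus m ε k ω = countTrue k (signPattern ε ω) := by
  simp [Vplus, countTrue, signPattern]

/-- The paper's `G_j = σ(V⁺(m), …, V⁺(m - j))`, with `j` capped at `m`. -/
noncomputable abbrev countSigmaAlgebra (ε : Fin m → Ω → ℝ) (j : ℕ) : MeasurableSpace Ω :=
  ⨆ l ∈ range (min j m + 1), MeasurableSpace.comap (Vplus m ε (m - l)) inferInstance

variable {ε : Fin m → Ω → ℝ}

theorem ratioN_eq_ratio_countTrue (j : ℕ) (ω : Ω) :
    ratioN m ε j ω = ratio (m - j) (countTrue (m - j) (signPattern ε ω)) := by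
  rw [← Vplus_eq_countTrue]
  rfl

theorem measurable_ratioN (j : ℕ) : Measurable[countSigmaAlgebra ε j] (ratioN m ε j) := by
  have hV : Measurable[countSigmaAlgebra ε j] (Vplus m ε (m - j)) := by
    refine (comap_measurable _).mono (le_iSup₂_of_le (min j m) (self_mem_range_succ _) ?_) le_rfl
    rw [show m - min j m = m - j by omega]
  exact (measurable_from_top (f := ratio (m - j))).comp hV

theorem exists_finset_swap_mem_of_measurableSet {j : ℕ} {s : Set Ω}
    (hs : MeasurableSet[countSigmaAlgebra ε j] s) :
    ∃ B : Finset (Fin m → Bool), s = signPattern ε ⁻¹' B ∧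
      ∀ a b : Fin m, (a : ℕ) < m - j → (b : ℕ) < m - j → ∀ β ∈ B, β ∘ Equiv.swap a b ∈ B := by
  refine ⟨({β | ∃ ω ∈ s, ∀ l ∈ range (min j m + 1),
    countTrue (m - l) β = Vplus m ε (m - l) ω} : Finset (Fin m → Bool)), ?_, ?_⟩
  · ext ω
    simp only [Set.mem_preimage, coe_filter, mem_univ, true_and, Set.mem_ofPred_eq]
    refine ⟨fun hω => ⟨ω, hω, fun l _ => (Vplus_eq_countTrue ε _ ω).symm⟩, ?_⟩
    rintro ⟨ω', hω', hcount⟩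
    refine (MeasurableSpace.mem_iff_of_measurableSet_iSup_comap hs fun l hl => ?_).mp hω'
    rw [← hcount l hl, Vplus_eq_countTrue]
  · intro a b ha hb β hβ
    simp only [mem_filter, mem_univ, true_and] at hβ ⊢
    obtain ⟨ω, hω, hcount⟩ := hβ
    refine ⟨ω, hω, fun l hl => ?_⟩
    have hl' : l ≤ j := by have := mem_range.mp hl; omega
    rw [countTrue_comp_swap (by omega) (by omega), hcount l hl]

variable [mΩ : MeasurableSpace Ω]

theorem measurable_signPattern (hε : ∀ i, Measurable (ε i)) : Measurable (signPattern ε) :=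
  measurable_pi_lambda _ fun i => measurable_to_bool <| by
    convert hε i (measurableSet_singleton 1) using 1
    ext; simp [signPattern]

variable (P : Measure Ω) [IsProbabilityMeasure P]

theorem measure_signPattern_preimage_singleton (hε : ∀ i, Measurable (ε i))
    (hindep : iIndepFun ε P) (hunif : ∀ i, P {ω | ε i ω = 1} = 1 / 2) (β : Fin m → Bool) :
    P (signPattern ε ⁻¹' {β}) = 2⁻¹ ^ m := by
  let S : Fin m → Set ℝ := fun i => if β i then {1} else {1}ᶜ
  have hS : ∀ i, MeasurableSet (S i) := fun i => by
    unfold S; split <;> simp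
  have hpre : signPattern ε ⁻¹' {β} = ⋂ i ∈ (univ : Finset (Fin m)), ε i ⁻¹' S i := by
    ext ω
    simp only [Set.mem_preimage, Set.mem_singleton_iff, funext_iff, signPattern, S, mem_univ,
      Set.iInter_true, Set.mem_iInter]
    refine forall_congr' fun i => ?_
    cases β i <;> simp
  have hfactor : ∀ i, P (ε i ⁻¹' S i) = 2⁻¹ := fun i => by
    have h₁ : P (ε i ⁻¹' {1}) = 2⁻¹ := by rw [← one_div]; exact hunif i
    unfold S
    split
    · exact h₁
    · rw [Set.preimage_compl, measure_compl (hε i (measurableSet_singleton 1))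
        (measure_ne_top _ _), measure_univ, h₁, ENNReal.one_sub_inv_two]
  rw [hpre, hindep.measure_inter_preimage_eq_mul univ fun i _ => hS i]
  simp [hfactor]

theorem setIntegral_comp_signPattern (hε : ∀ i, Measurable (ε i)) (hindep : iIndepFun ε P)
    (hunif : ∀ i, P {ω | ε i ω = 1} = 1 / 2) (g : (Fin m → Bool) → ℝ)
    (B : Finset (Fin m → Bool)) :
    ∫ ω in signPattern ε ⁻¹' B, g (signPattern ε ω) ∂P = 2⁻¹ ^ m * ∑ β ∈ B, g β := by
  have hlaw : ∀ β, (P.map (signPattern ε)).real {β} = 2⁻¹ ^ m := fun β => by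
    rw [measureReal_def, Measure.map_apply (measurable_signPattern hε) (measurableSet_singleton β),
      measure_signPattern_preimage_singleton P hε hindep hunif]
    simp
  rw [← setIntegral_map B.measurableSet (measurable_of_finite g).aestronglyMeasurable
    (measurable_signPattern hε).aemeasurable,
    setIntegral_finset _ Integrable.of_finite.integrableOn]
  simp [hlaw, mul_sum]

theorem integrable_ratioN (hε : ∀ i, Measurable (ε i)) (j : ℕ) : Integrable (ratioN m ε j) P := by
  simp_rw [funext (ratioN_eq_ratio_countTrue j)]
  exact Integrable.comp_measurable (g := fun β => ratio (m - j) (countTrue (m - j) β))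
    .of_finite (measurable_signPattern hε)

theorem setIntegral_ratioN (hε : ∀ i, Measurable (ε i)) (hindep : iIndepFun ε P)
    (hunif : ∀ i, P {ω | ε i ω = 1} = 1 / 2) (j : ℕ) (B : Finset (Fin m → Bool)) :
    ∫ ω in signPattern ε ⁻¹' B, ratioN m ε j ω ∂P =
      2⁻¹ ^ m * ∑ β ∈ B, ratio (m - j) (countTrue (m - j) β) := by
  simp_rw [ratioN_eq_ratio_countTrue]
  exact setIntegral_comp_signPattern P hε hindep hunif
    (fun β => ratio (m - j) (countTrue (m - j) β)) B

theorem integral_ratioN_zero (hε : ∀ i, Measurable (ε i)) (hindep : iIndepFun ε P)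
    (hunif : ∀ i, P {ω | ε i ω = 1} = 1 / 2) :
    ∫ ω, ratioN m ε 0 ω ∂P = 1 - 2⁻¹ ^ m := by
  have h := setIntegral_ratioN P hε hindep hunif 0 univ
  rw [coe_univ, Set.preimage_univ, setIntegral_univ, Nat.sub_zero,
    sum_comp_countTrue_self (ratio m), sum_choose_mul_ratio] at h
  rw [h, mul_sub, ← mul_pow, inv_mul_cancel₀ two_ne_zero, one_pow, mul_one]

theorem setIntegral_ratioN_succ_le (hε : ∀ i, Measurable (ε i)) (hindep : iIndepFun ε P)
    (hunif : ∀ i, P {ω | ε i ω = 1} = 1 / 2) {j : ℕ} {s : Set Ω}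
    (hs : MeasurableSet[countSigmaAlgebra ε j] s) :
    ∫ ω in s, ratioN m ε (j + 1) ω ∂P ≤ ∫ ω in s, ratioN m ε j ω ∂P := by
  rcases le_or_gt m j with hmj | hjm
  · simp only [ratioN, Nat.sub_eq_zero_of_le hmj, Nat.sub_eq_zero_of_le (hmj.trans j.le_succ),
      le_refl]
  obtain ⟨B, rfl, hB⟩ := exists_finset_swap_mem_of_measurableSet hs
  let i : Fin m := ⟨m - (j + 1), by omega⟩
  have hi : m - j = i + 1 := show m - j = m - (j + 1) + 1 by omega
  rw [setIntegral_ratioN P hε hindep hunif, setIntegral_ratioN P hε hindep hunif, hi,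
    show m - (j + 1) = i from rfl]
  refine mul_le_mul_of_nonneg_left ?_ (by positivity)
  have hik : m - (j + 1) < m - j := by omega
  exact sum_ratio_countTrue_le i fun a ha => hB a i ((Fin.le_def.mp ha).trans_lt hik) hik

theorem supermartingale_ratioN (hε : ∀ i, Measurable (ε i)) (hindep : iIndepFun ε P)
    (hunif : ∀ i, P {ω | ε i ω = 1} = 1 / 2) {G : Filtration ℕ mΩ}
    (hG : ∀ j, (G j : MeasurableSpace Ω) = countSigmaAlgebra ε j) :
    Supermartingale (ratioN m ε) G P :=
  supermartingale_of_setIntegral_succ_le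
    (fun j => (hG j ▸ measurable_ratioN j).stronglyMeasurable) (integrable_ratioN P hε)
    fun j _ hs => setIntegral_ratioN_succ_le P hε hindep hunif (hG j ▸ hs)

end SignPattern

end SignRatio

/-- **Backward supermartingale property and optional stopping for the
sign-ratio process.**
Let `ε₁, …, ε_m` be i.i.d. uniform `{-1, +1}` random variables, let
`M_k = V⁺(k)/(1 + V⁻(k))` and `N_j = M_{m-j}`, and let `G_j` be the σ-algebra
generated by `V⁺(m), V⁺(m-1), …, V⁺(m-j)`. Then `(N_j)` is a supermartingale
with respect to `(G_j)`, `E[N_0] = 1 - 2^{-m} ≤ 1`, and for every stopping time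
`T ≤ m` one has `E[N_T] ≤ E[N_0]`. -/
theorem sign_ratio_supermartingale_optional_stopping
    {Ω : Type*} [mΩ : MeasurableSpace Ω]
    (P : Measure Ω) [IsProbabilityMeasure P]
    (m : ℕ) (ε : Fin m → Ω → ℝ) (hmeas : ∀ i, Measurable (ε i))
    (hindep : iIndepFun ε P)
    (hunif : ∀ i, P {ω | ε i ω = 1} = 1 / 2 ∧ P {ω | ε i ω = -1} = 1 / 2)
    (G : Filtration ℕ mΩ)
    (hG : ∀ j : ℕ, (G j : MeasurableSpace Ω) =
      ⨆ l ∈ Finset.range (min j m + 1),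
        MeasurableSpace.comap (Vplus m ε (m - l)) inferInstance) :
    Supermartingale (ratioN m ε) G P ∧
    (∫ ω, ratioN m ε 0 ω ∂P) = 1 - (2 : ℝ)⁻¹ ^ m ∧
    (1 - (2 : ℝ)⁻¹ ^ m ≤ (1 : ℝ)) ∧
    ∀ T : Ω → ℕ, IsStoppingTime G (fun ω => (T ω : WithTop ℕ)) → (∀ ω, T ω ≤ m) →
      (∫ ω, ratioN m ε (T ω) ω ∂P) ≤ ∫ ω, ratioN m ε 0 ω ∂P := by
  have hplus : ∀ i, P {ω | ε i ω = 1} = 1 / 2 := fun i => (hunif i).1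
  have hsuper := SignRatio.supermartingale_ratioN P hmeas hindep hplus hG
  exact ⟨hsuper, SignRatio.integral_ratioN_zero P hmeas hindep hplus, sub_le_self _ (by positivity),
    fun T hT hTm => hsuper.integral_stopped_le_integral_zero hT hTm⟩
end
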